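/- Let m ≥ 3 and n ≥ 1 be integers, let Ā be the cyclic transfer matrix for width m, and let σ_c be the all-covered cyclic signature (covered, covered, …, covered). Then the domination polynomial of the m×n cylinder graph satisfies G_{m̄×n}(z) = Σ_σ (Ā^n)_{σ,σ_c}, where the sum runs over all cyclic signatures σ of length m that contain no uncovered symbol. -/

import Mathlib

open scoped Classical
open Polynomial

/-- The three possible states of a vertex relative to a vertex subset. -/
inductive VState : Type
  | unc | cov | occ
  deriving DecidableEq

instance : Fintype VState where
  elems := {VState.unc, VState.cov, VState.occ}
  complete := by intro x; cases x <;> simp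

/-- `S` is a dominating set of `G`: every vertex is in `S` or adjacent to a vertex of `S`. -/
def IsDominating {V : Type*} (G : SimpleGraph V) (S : Finset V) : Prop :=
  ∀ v : V, v ∈ S ∨ ∃ u ∈ S, G.Adj u v

/-- The domination polynomial of `G`. -/
noncomputable def domPoly {V : Type*} [Fintype V] (G : SimpleGraph V) : Polynomial ℤ :=
  ∑ S ∈ Finset.univ.filter (fun S : Finset V => IsDominating G S),
    (X : Polynomial ℤ) ^ S.card

/-- The m×n cylinder graph `C_m □ P_n`; the vertex `(i, j)` lies in column `i` and row `j`. -/
def cylinderGraph (m n : ℕ) : SimpleGraph (Fin m × Fin n) :=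
  (SimpleGraph.cycleGraph m).boxProd (SimpleGraph.pathGraph n)

/-- A signature of length `m`: a string over {unc, cov, occ} with no adjacent
(unc, occ) or (occ, unc) pair. -/
def IsSignature {m : ℕ} (σ : Fin m → VState) : Prop :=
  ∀ i : Fin m, ∀ h : (i : ℕ) + 1 < m,
    ¬(σ i = VState.unc ∧ σ ⟨(i : ℕ) + 1, h⟩ = VState.occ) ∧
    ¬(σ i = VState.occ ∧ σ ⟨(i : ℕ) + 1, h⟩ = VState.unc)

/-- A cyclic signature: a signature where the adjacency constraint is also imposed
on the pair (first symbol, last symbol). -/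
def IsCycSignature {m : ℕ} (σ : Fin m → VState) : Prop :=
  IsSignature σ ∧ ∀ h : 0 < m,
    ¬(σ ⟨0, h⟩ = VState.unc ∧ σ ⟨m - 1, Nat.sub_lt h Nat.one_pos⟩ = VState.occ) ∧
    ¬(σ ⟨0, h⟩ = VState.occ ∧ σ ⟨m - 1, Nat.sub_lt h Nat.one_pos⟩ = VState.unc)

/-- The cyclic successor of an index (mod `m`). -/
def cycNext {m : ℕ} (i : Fin m) : Fin m := ⟨((i : ℕ) + 1) % m, Nat.mod_lt _ i.pos⟩

/-- The cyclic predecessor of an index (mod `m`). -/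
def cycPrev {m : ℕ} (i : Fin m) : Fin m := ⟨((i : ℕ) + (m - 1)) % m, Nat.mod_lt _ i.pos⟩

/-- `τ` is (cyclically) compatible with `σ`, indices taken mod `m`. -/
def CompatibleCyc {m : ℕ} (τ σ : Fin m → VState) : Prop :=
  ∀ i : Fin m,
    (σ i = VState.unc → τ i = VState.occ) ∧
    (σ i = VState.occ → τ i = VState.cov ∨ τ i = VState.occ) ∧
    (τ i = VState.cov → σ i = VState.occ ∨
      τ (cycPrev i) = VState.occ ∨ τ (cycNext i) = VState.occ)

/-- The number of occupied symbols of a signature. -/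
def occCount {m : ℕ} (σ : Fin m → VState) : ℕ :=
  (Finset.univ.filter fun i => σ i = VState.occ).card

/-- The type of cyclic signatures of length `m`. -/
abbrev CycSignature (m : ℕ) := {σ : Fin m → VState // IsCycSignature σ}

/-- The cyclic transfer matrix for width `m`, over ℤ[z], indexed by cyclic signatures. -/
noncomputable def cycTransferMatrix (m : ℕ) :
    Matrix (CycSignature m) (CycSignature m) (Polynomial ℤ) :=
  fun τ σ =>
    if CompatibleCyc τ.1 σ.1 then (X : Polynomial ℤ) ^ occCount τ.1 else 0

/-- The all-covered signature `(cov, cov, …, cov)`. -/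
def allCov (m : ℕ) : Fin m → VState := fun _ => VState.cov

lemma allCov_isCycSignature (m : ℕ) : IsCycSignature (allCov m) := by
  refine ⟨fun i h => ?_, fun h => ?_⟩ <;>
    constructor <;> rintro ⟨h1, h2⟩ <;> simp [allCov] at h1

/-!
Build the cylinder row by row. For a vertex set `S` of the first `n + 1` rows that dominates
every vertex below the top row, record the state of each top-row vertex (occupied, covered by
`S`, uncovered) as a cyclic signature `topSig S`. Putting a new row on top keeps the old top row
dominated, and gives the new top row the signature `τ`, exactly when the new row is occupied where
`τ` is and `τ` is compatible with the old signature `σ`; the new row contributes `z ^ #occ(τ)`.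
Hence the generating polynomials of such sets, sorted by top signature, satisfy
`F_{n+1} = Ā F_n`. A single row is the step from the all-covered signature (nothing below it is
occupied and nothing needs dominating), and `S` dominates the whole cylinder iff its top
signature has no uncovered entry.
-/

open VState Finset

section CyclicIndex

variable {m : ℕ}

lemma cycNext_cycPrev (i : Fin m) : cycNext (cycPrev i) = i := by
  have := i.isLt
  ext
  simp only [cycNext, cycPrev, Nat.mod_add_mod]
  rw [show (i : ℕ) + (m - 1) + 1 = i + m by omega, Nat.add_mod_right, Nat.mod_eq_of_lt this]

lemma cycPrev_cycNext (i : Fin m) : cycPrev (cycNext i) = i := by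
  have := i.isLt
  ext
  simp only [cycNext, cycPrev, Nat.mod_add_mod]
  rw [show (i : ℕ) + 1 + (m - 1) = i + m by omega, Nat.add_mod_right, Nat.mod_eq_of_lt this]

lemma cycNext_castSucc {k : ℕ} (i : Fin k) : cycNext i.castSucc = i.succ := by
  ext
  simp [cycNext, Nat.mod_eq_of_lt (Nat.succ_lt_succ i.isLt)]

lemma cycNext_last (k : ℕ) : cycNext (Fin.last k) = 0 := by
  ext
  simp [cycNext]

lemma isCycSignature_iff_cycNext {σ : Fin m → VState} : IsCycSignature σ ↔
    ∀ i, ¬(σ i = unc ∧ σ (cycNext i) = occ) ∧ ¬(σ i = occ ∧ σ (cycNext i) = unc) := by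
  rcases m with _ | k
  · simp [IsCycSignature, IsSignature]
  rw [Fin.forall_fin_succ', cycNext_last]
  simp only [cycNext_castSucc, IsCycSignature, IsSignature]
  refine and_congr ⟨fun h i => h i.castSucc (by simp), fun h i hi => h ⟨i, by omega⟩⟩ ?_
  simp only [Fin.last, Nat.add_sub_cancel, Fin.zero_eta, Nat.zero_lt_succ, forall_true_left]
  tauto

lemma isCycSignature_iff {σ : Fin m → VState} : IsCycSignature σ ↔
    ∀ i, σ i = unc → σ (cycNext i) ≠ occ ∧ σ (cycPrev i) ≠ occ := by
  rw [isCycSignature_iff_cycNext]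
  refine ⟨fun h i hi => ⟨fun ho => (h i).1 ⟨hi, ho⟩, fun ho => ?_⟩,
    fun h i => ⟨fun ⟨hu, ho⟩ => (h i hu).1 ho, fun ⟨ho, hu⟩ => ?_⟩⟩
  · exact (h (cycPrev i)).2 ⟨ho, by rwa [cycNext_cycPrev]⟩
  · exact (h (cycNext i) hu).2 (by rwa [cycPrev_cycNext])

end CyclicIndex

section Domination

variable {m n : ℕ}

def Dominated {V : Type*} (G : SimpleGraph V) (S : Finset V) (v : V) : Prop :=
  v ∈ S ∨ ∃ u ∈ S, G.Adj u v

lemma cycleGraph_adj_iff {u v : Fin m} :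
    (SimpleGraph.cycleGraph m).Adj u v ↔ u ≠ v ∧ (u = cycNext v ∨ u = cycPrev v) := by
  match m with
  | 0 => exact v.elim0
  | 1 => simp [Subsingleton.elim u v]
  | k + 2 =>
    have hnext : cycNext v = v + 1 := by ext; simp [cycNext, Fin.val_add]
    have hprev : cycPrev v = v - 1 := by ext; simp [cycPrev, Fin.sub_def, Nat.add_comm]
    rw [SimpleGraph.cycleGraph_adj, hnext, hprev, sub_eq_iff_eq_add', sub_eq_iff_eq_add',
      eq_sub_iff_add_eq, eq_comm (a := v)]
    refine ⟨fun h => ⟨?_, h⟩, And.right⟩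
    rintro rfl
    simp at h

lemma cylinder_dominated_iff (S : Finset (Fin m × Fin n)) (i : Fin m) (j : Fin n) :
    Dominated (cylinderGraph m n) S (i, j) ↔
      (i, j) ∈ S ∨ (cycNext i, j) ∈ S ∨ (cycPrev i, j) ∈ S ∨
        ∃ j' : Fin n, ((j' : ℕ) + 1 = j ∨ (j : ℕ) + 1 = j') ∧ (i, j') ∈ S := by
  simp only [Dominated, cylinderGraph, SimpleGraph.boxProd_adj, cycleGraph_adj_iff,
    SimpleGraph.pathGraph_adj, Prod.exists]
  constructor
  · rintro (h | ⟨a, b, hS, ⟨⟨-, rfl | rfl⟩, rfl⟩ | ⟨hb, rfl⟩⟩)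
    exacts [Or.inl h, Or.inr (Or.inl hS), Or.inr (Or.inr (Or.inl hS)),
      Or.inr (Or.inr (Or.inr ⟨b, hb, hS⟩))]
  · rintro (h | h | h | ⟨b, hb, hS⟩)
    · exact Or.inl h
    · by_cases hi : cycNext i = i
      · exact Or.inl (hi ▸ h)
      · exact Or.inr ⟨_, _, h, Or.inl ⟨⟨hi, Or.inl rfl⟩, rfl⟩⟩
    · by_cases hi : cycPrev i = i
      · exact Or.inl (hi ▸ h)
      · exact Or.inr ⟨_, _, h, Or.inl ⟨⟨hi, Or.inr rfl⟩, rfl⟩⟩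
    · exact Or.inr ⟨i, b, hS, Or.inr ⟨hb, rfl⟩⟩

end Domination

section Rows

variable {m n : ℕ}

def dropTop (S : Finset (Fin m × Fin (n + 1))) : Finset (Fin m × Fin n) :=
  univ.filter fun p => (p.1, p.2.castSucc) ∈ S

def addTop (R : Finset (Fin m × Fin n)) (τ : Fin m → VState) : Finset (Fin m × Fin (n + 1)) :=
  R.map (.prodMap (.refl _) Fin.castSuccEmb) ∪
    (univ.filter (τ · = occ)).map (.sectL _ (Fin.last n))

def OccupiesTop (R : Finset (Fin m × Fin n)) (i : Fin m) : Prop :=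
  ∃ j : Fin n, (j : ℕ) + 1 = n ∧ (i, j) ∈ R

@[simp]
lemma mem_dropTop {S : Finset (Fin m × Fin (n + 1))} {i : Fin m} {j : Fin n} :
    (i, j) ∈ dropTop S ↔ (i, j.castSucc) ∈ S := by
  simp [dropTop]

@[simp]
lemma mem_addTop_castSucc {R : Finset (Fin m × Fin n)} {τ : Fin m → VState} {i : Fin m}
    {j : Fin n} : (i, j.castSucc) ∈ addTop R τ ↔ (i, j) ∈ R := by
  simp [addTop, eq_comm (a := Fin.last n)]

@[simp]
lemma mem_addTop_last {R : Finset (Fin m × Fin n)} {τ : Fin m → VState} {i : Fin m} :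
    (i, Fin.last n) ∈ addTop R τ ↔ τ i = occ := by
  simp [addTop]

lemma dropTop_addTop (R : Finset (Fin m × Fin n)) (τ : Fin m → VState) :
    dropTop (addTop R τ) = R := by
  ext ⟨i, j⟩
  simp

lemma addTop_injective (τ : Fin m → VState) :
    Function.Injective (addTop · τ : Finset (Fin m × Fin n) → _) :=
  Function.LeftInverse.injective (dropTop_addTop · τ)

lemma card_addTop (R : Finset (Fin m × Fin n)) (τ : Fin m → VState) :
    (addTop R τ).card = R.card + occCount τ := by
  rw [addTop, card_union_of_disjoint, card_map, card_map, occCount]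
  simp only [disjoint_left, mem_map, mem_filter, mem_univ, true_and, not_exists, not_and]
  rintro _ ⟨⟨i, j⟩, -, rfl⟩ k - h
  exact Fin.castSucc_ne_last j (congrArg Prod.snd h).symm

lemma occupiesTop_iff {R : Finset (Fin m × Fin (n + 1))} {i : Fin m} :
    OccupiesTop R i ↔ (i, Fin.last n) ∈ R :=
  ⟨fun ⟨j, hj, h⟩ => by rwa [show j = Fin.last n by ext; simp; omega] at h,
    fun h => ⟨Fin.last n, rfl, h⟩⟩

end Rows

section TopSignature

variable {m n : ℕ}

noncomputable def topSig (S : Finset (Fin m × Fin (n + 1))) : Fin m → VState := fun i =>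
  if (i, Fin.last n) ∈ S then occ
  else if Dominated (cylinderGraph m (n + 1)) S (i, Fin.last n) then cov else unc

def LowerDominated (S : Finset (Fin m × Fin (n + 1))) : Prop :=
  ∀ (i : Fin m) (j : Fin n), Dominated (cylinderGraph m (n + 1)) S (i, j.castSucc)

variable {S : Finset (Fin m × Fin (n + 1))} {i : Fin m}

lemma topSig_eq_occ : topSig S i = occ ↔ (i, Fin.last n) ∈ S := by
  unfold topSig; split_ifs <;> simp_all

lemma topSig_eq_cov :
    topSig S i = cov ↔
      (i, Fin.last n) ∉ S ∧ Dominated (cylinderGraph m (n + 1)) S (i, Fin.last n) := by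
  unfold topSig; split_ifs <;> simp_all

lemma topSig_eq_unc :
    topSig S i = unc ↔ ¬Dominated (cylinderGraph m (n + 1)) S (i, Fin.last n) := by
  unfold topSig; split_ifs with h <;> simp_all [Dominated]

lemma dominated_last_iff : Dominated (cylinderGraph m (n + 1)) S (i, Fin.last n) ↔
    (i, Fin.last n) ∈ S ∨ (cycNext i, Fin.last n) ∈ S ∨ (cycPrev i, Fin.last n) ∈ S ∨
      OccupiesTop (dropTop S) i := by
  rw [cylinder_dominated_iff, Fin.exists_fin_succ']
  simp only [OccupiesTop, mem_dropTop, Fin.val_castSucc, Fin.val_last, add_eq_left,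
    one_ne_zero, or_false, false_and]
  refine or_congr_right (or_congr_right (or_congr_right (exists_congr fun j => ?_)))
  have := j.isLt
  constructor <;> rintro ⟨h, hS⟩ <;> exact ⟨by omega, hS⟩

lemma topSig_isCycSignature (S : Finset (Fin m × Fin (n + 1))) : IsCycSignature (topSig S) :=
  isCycSignature_iff.2 fun i hi => by
    simp only [topSig_eq_unc, dominated_last_iff, not_or] at hi
    exact ⟨fun h => hi.2.1 (topSig_eq_occ.1 h), fun h => hi.2.2.1 (topSig_eq_occ.1 h)⟩

lemma isDominating_iff_lowerDominated :
    IsDominating (cylinderGraph m (n + 1)) S ↔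
      LowerDominated S ∧ ∀ i, topSig S i ≠ unc := by
  change (∀ v, Dominated _ S v) ↔ _
  simp only [Prod.forall, Fin.forall_fin_succ' (n := n), forall_and, ne_eq, topSig_eq_unc, not_not,
    LowerDominated]

end TopSignature

section Transfer

variable {m n : ℕ}

lemma addTop_dropTop (S : Finset (Fin m × Fin (n + 1))) : addTop (dropTop S) (topSig S) = S := by
  ext ⟨i, j⟩
  induction j using Fin.lastCases <;> simp [topSig_eq_occ]

lemma compatibleCyc_topSig {S : Finset (Fin m × Fin (n + 1))} {σ : Fin m → VState}
    (hocc : ∀ i, σ i = occ ↔ OccupiesTop (dropTop S) i)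
    (hunc : ∀ i, σ i = unc → topSig S i = occ) : CompatibleCyc (topSig S) σ := by
  intro i
  refine ⟨hunc i, fun h => ?_, fun h => ?_⟩
  · have hdom := dominated_last_iff.2 (Or.inr (Or.inr (Or.inr ((hocc i).1 h))))
    by_cases hS : (i, Fin.last n) ∈ S
    exacts [Or.inr (topSig_eq_occ.2 hS), Or.inl (topSig_eq_cov.2 ⟨hS, hdom⟩)]
  · obtain ⟨hS, hdom⟩ := topSig_eq_cov.1 h
    rcases dominated_last_iff.1 hdom with h | h | h | h
    exacts [absurd h hS, Or.inr (Or.inr (topSig_eq_occ.2 h)), Or.inr (Or.inl (topSig_eq_occ.2 h)),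
      Or.inl ((hocc i).2 h)]

lemma topSig_addTop {R : Finset (Fin m × Fin n)} {τ σ : Fin m → VState}
    (hτ : IsCycSignature τ) (hocc : ∀ i, σ i = occ ↔ OccupiesTop R i)
    (hcomp : CompatibleCyc τ σ) :
    topSig (addTop R τ) = τ := by
  funext i
  cases hv : τ i with
  | occ => exact topSig_eq_occ.2 (mem_addTop_last.2 hv)
  | cov =>
    refine topSig_eq_cov.2 ⟨by simp [hv], dominated_last_iff.2 ?_⟩
    rw [dropTop_addTop, mem_addTop_last, mem_addTop_last, mem_addTop_last, ← hocc]
    have := (hcomp i).2.2 hv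
    tauto
  | unc =>
    refine topSig_eq_unc.2 ?_
    rw [dominated_last_iff, dropTop_addTop, mem_addTop_last, mem_addTop_last, mem_addTop_last,
      ← hocc]
    have := (hcomp i).2.1
    have := isCycSignature_iff.1 hτ i hv
    simp_all

lemma dominated_castSucc_iff {S : Finset (Fin m × Fin (n + 2))} {i : Fin m} {j : Fin (n + 1)} :
    Dominated (cylinderGraph m (n + 2)) S (i, j.castSucc) ↔
      Dominated (cylinderGraph m (n + 1)) (dropTop S) (i, j) ∨
        (j = Fin.last n ∧ (i, Fin.last (n + 1)) ∈ S) := by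
  rw [cylinder_dominated_iff, cylinder_dominated_iff, Fin.exists_fin_succ']
  simp only [mem_dropTop, Fin.val_castSucc, Fin.val_last]
  have : ((n + 1 : ℕ) + 1 = j ∨ (j : ℕ) + 1 = n + 1) ↔ j = Fin.last n := by
    rw [Fin.ext_iff, Fin.val_last]; omega
  rw [this, or_assoc, or_assoc, or_assoc]

lemma lowerDominated_succ_iff {S : Finset (Fin m × Fin (n + 2))} :
    LowerDominated S ↔ LowerDominated (dropTop S) ∧
      ∀ i, topSig (dropTop S) i = unc → topSig S i = occ := by
  simp only [LowerDominated, Fin.forall_fin_succ' (n := n), dominated_castSucc_iff,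
    Fin.castSucc_ne_last, false_and, or_false, forall_and, topSig_eq_unc, topSig_eq_occ,
    ← or_iff_not_imp_left, true_and]

lemma compatibleCyc_topSig_dropTop {S : Finset (Fin m × Fin (n + 2))} (hS : LowerDominated S) :
    CompatibleCyc (topSig S) (topSig (dropTop S)) :=
  compatibleCyc_topSig (fun _ => topSig_eq_occ.trans occupiesTop_iff.symm)
    (lowerDominated_succ_iff.1 hS).2

end Transfer

section Recurrence

variable {m n : ℕ}

noncomputable def partialDomPoly (m n : ℕ) (τ : Fin m → VState) : ℤ[X] :=
  ∑ S ∈ univ.filter (fun S : Finset (Fin m × Fin (n + 1)) =>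
      LowerDominated S ∧ topSig S = τ), X ^ S.card

lemma partialDomPoly_zero (τ : CycSignature m) :
    partialDomPoly m 0 τ.1 = cycTransferMatrix m τ ⟨allCov m, allCov_isCycSignature m⟩ := by
  have hocc (R : Finset (Fin m × Fin 0)) (i : Fin m) : allCov m i = occ ↔ OccupiesTop R i :=
    ⟨fun h => absurd h (by simp [allCov]), fun ⟨j, _⟩ => j.elim0⟩
  have hlow (S : Finset (Fin m × Fin 1)) : LowerDominated S := fun _ j => j.elim0
  rw [partialDomPoly, cycTransferMatrix]
  split_ifs with hcomp
  · have hfiber : univ.filter (fun S : Finset (Fin m × Fin 1) =>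
        LowerDominated S ∧ topSig S = τ.1) = {addTop ∅ τ.1} := by
      ext S
      simp only [mem_filter, mem_univ, true_and, mem_singleton, hlow]
      refine ⟨fun h => ?_, fun h => h ▸ topSig_addTop τ.2 (hocc ∅) hcomp⟩
      rw [← addTop_dropTop S, h, eq_empty_of_isEmpty (dropTop S)]
    rw [hfiber, sum_singleton, card_addTop, card_empty, zero_add]
  · refine sum_eq_zero fun S hS => absurd ?_ hcomp
    rw [← (mem_filter.1 hS).2.2]
    exact compatibleCyc_topSig (hocc _) (fun i h => by simp [allCov] at h)

lemma filter_eq_image_addTop {τ σ : Fin m → VState} (hτ : IsCycSignature τ)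
    (hcomp : CompatibleCyc τ σ) :
    univ.filter (fun S : Finset (Fin m × Fin (n + 2)) =>
        (LowerDominated S ∧ topSig S = τ) ∧ topSig (dropTop S) = σ) =
      (univ.filter fun R => LowerDominated R ∧ topSig R = σ).image (addTop · τ) := by
  ext S
  simp only [mem_filter, mem_univ, true_and, mem_image]
  constructor
  · rintro ⟨⟨hlow, hτS⟩, hσS⟩
    exact ⟨dropTop S, ⟨(lowerDominated_succ_iff.1 hlow).1, hσS⟩, hτS ▸ addTop_dropTop S⟩
  · rintro ⟨R, ⟨hlow, rfl⟩, rfl⟩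
    have htop := topSig_addTop hτ (fun _ => topSig_eq_occ.trans occupiesTop_iff.symm) hcomp
    simp only [lowerDominated_succ_iff, dropTop_addTop, htop, hlow, true_and, and_true]
    exact fun i h => (hcomp i).1 h

lemma partialDomPoly_succ (τ : CycSignature m) :
    partialDomPoly m (n + 1) τ.1 =
      ∑ σ : CycSignature m, cycTransferMatrix m τ σ * partialDomPoly m n σ.1 := by
  rw [partialDomPoly, ← sum_fiberwise_of_maps_to (t := univ) (fun _ _ => mem_univ _)
    (g := fun S => (⟨topSig (dropTop S), topSig_isCycSignature _⟩ : CycSignature m))]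
  refine sum_congr rfl fun σ _ => ?_
  simp only [filter_filter, Subtype.ext_iff, cycTransferMatrix]
  split_ifs with hcomp
  · rw [filter_eq_image_addTop τ.2 hcomp, sum_image (addTop_injective τ.1).injOn, partialDomPoly,
      mul_sum]
    exact sum_congr rfl fun R _ => by rw [card_addTop, pow_add, mul_comm]
  · refine sum_eq_zero fun S hS => absurd ?_ hcomp
    obtain ⟨⟨hlow, hτ⟩, hσ⟩ := (mem_filter.1 hS).2
    rw [← hτ, ← hσ]
    exact compatibleCyc_topSig_dropTop hlow

lemma partialDomPoly_eq_pow (τ : CycSignature m) :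
    partialDomPoly m n τ.1 =
      (cycTransferMatrix m ^ (n + 1)) τ ⟨allCov m, allCov_isCycSignature m⟩ := by
  induction n generalizing τ with
  | zero => rw [zero_add, pow_one, partialDomPoly_zero]
  | succ n ih => simp only [partialDomPoly_succ, ih, pow_succ' _ (n + 1), Matrix.mul_apply]

end Recurrence

lemma domPoly_cylinder_succ (m n : ℕ) :
    domPoly (cylinderGraph m (n + 1)) =
      ∑ σ ∈ univ.filter (fun σ : CycSignature m => ∀ i, σ.1 i ≠ unc),
        partialDomPoly m n σ.1 := by
  rw [domPoly, ← sum_fiberwise_of_maps_to (g := fun S => ⟨topSig S, topSig_isCycSignature S⟩)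
    (t := univ.filter fun σ : CycSignature m => ∀ i, σ.1 i ≠ unc)]
  · refine sum_congr rfl fun σ hσ => ?_
    rw [filter_filter]
    refine sum_congr (filter_congr fun S _ => ?_) fun _ _ => rfl
    rw [isDominating_iff_lowerDominated, Subtype.ext_iff]
    constructor
    · rintro ⟨⟨hlow, -⟩, hS⟩
      exact ⟨hlow, hS⟩
    · rintro ⟨hlow, hS⟩
      exact ⟨⟨hlow, hS ▸ (mem_filter.1 hσ).2⟩, hS⟩
  · intro S hS
    exact mem_filter.2 ⟨mem_univ _, (isDominating_iff_lowerDominated.1 (mem_filter.1 hS).2).2⟩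

theorem cylinder_domPoly_eq_transferMatrix_pow (m n : ℕ) :
    domPoly (cylinderGraph m n) =
      ∑ σ ∈ Finset.univ.filter (fun σ : CycSignature m => ∀ i, σ.1 i ≠ VState.unc),
        (cycTransferMatrix m ^ n) σ ⟨allCov m, allCov_isCycSignature m⟩ := by
  cases n with
  | zero =>
    simp [domPoly, IsDominating, Matrix.one_apply, allCov, eq_empty_of_isEmpty]
  | succ n => simp only [domPoly_cylinder_succ, partialDomPoly_eq_pow]
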